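/- Let X and Y be independent non-negative random variables with PDFs f(x) = x^{α−1} Σ_{m=1}^M a_m e^{−ξ_m x} and g(y) = y^{β−1} Σ_{n=1}^N b_n e^{−η_n y}, where α, β > 0 and Re(ξ_m), Re(η_n) > 0. Then the PDF of X + Y is s(t) = t^{α+β−1} · (Γ(α)Γ(β)/Γ(α+β)) Σ_{m=1}^M Σ_{n=1}^N a_m b_n e^{−ξ_m t} ₁F₁(β, α+β; (ξ_m−η_n)t) for t > 0. -/

import Mathlib

open MeasureTheory intervalIntegral

noncomputable def hyp1F1 (a b z : ℂ) : ℂ :=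
  ∑' k : ℕ, (∏ i ∈ Finset.range k, (a + i) / (b + i)) * z ^ k / (k.factorial : ℂ)

/-! Substituting `y = t x` turns each term of the convolution into
`t ^ (α + β - 1) e ^ (-ξ t) ∫₀¹ x ^ (β - 1) (1 - x) ^ (α - 1) e ^ ((ξ - η) t x) dx`.
Expanding the exponential and integrating termwise, the `k`-th term is the Beta integral
`B(β + k, α) = B(β, α) ∏_{i < k} (β + i) / (α + β + i)`, and these are exactly the coefficients
of `₁F₁(β; α + β; ·)`: this is Euler's integral representation of Kummer's function. -/

open Nat Complex

namespace Complex

theorem betaIntegral_add_one_left {u v : ℂ} (hu : 0 < u.re) (hv : 0 < v.re) :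
    betaIntegral (u + 1) v = u / (u + v) * betaIntegral u v := by
  have hu1 : 0 < (u + 1).re := by rw [add_re, one_re]; linarith
  have huv : 0 < (u + v).re := by rw [add_re]; linarith
  rw [betaIntegral_eq_Gamma_mul_div _ _ hu1 hv, betaIntegral_eq_Gamma_mul_div _ _ hu hv,
    add_right_comm, Gamma_add_one _ (ne_zero_of_re_pos hu), Gamma_add_one _ (ne_zero_of_re_pos huv)]
  have hΓ := Gamma_ne_zero_of_re_pos huv
  have huv₀ := ne_zero_of_re_pos huv
  field_simp

theorem betaIntegral_add_nat_left {u v : ℂ} (hu : 0 < u.re) (hv : 0 < v.re) (k : ℕ) :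
    betaIntegral (u + k) v = betaIntegral u v * ∏ i ∈ Finset.range k, (u + i) / (u + v + i) := by
  induction k with
  | zero => simp
  | succ k ih =>
    have hk : 0 < (u + k).re := by rw [add_re, natCast_re]; positivity
    rw [Nat.cast_succ, ← add_assoc, betaIntegral_add_one_left hk hv, ih, Finset.prod_range_succ,
      add_right_comm u v]
    ring

end Complex

theorem integral_betaIntegrand_mul_exp {u v : ℂ} (hu : 0 < u.re) (hv : 0 < v.re) (z : ℂ) :
    ∫ x : ℝ in 0..1, (x : ℂ) ^ (u - 1) * (1 - (x : ℂ)) ^ (v - 1) * exp (z * x) =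
      betaIntegral u v * hyp1F1 u (u + v) z := by
  set w : ℝ → ℂ := fun x => (x : ℂ) ^ (u - 1) * (1 - (x : ℂ)) ^ (v - 1) with hw_def
  have hw : IntervalIntegrable w volume 0 1 := betaIntegral_convergent hu hv
  have hterm (k : ℕ) : ∫ x : ℝ in 0..1, w x * ((z * x) ^ k / k !) =
      betaIntegral u v * ((∏ i ∈ Finset.range k, (u + i) / (u + v + i)) * z ^ k / k !) := by
    calc ∫ x : ℝ in 0..1, w x * ((z * x) ^ k / k !)
        = ∫ x : ℝ in 0..1, (x : ℂ) ^ (u + k - 1) * (1 - (x : ℂ)) ^ (v - 1) * (z ^ k / k !) := by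
          refine integral_congr_Ioo_of_le zero_le_one fun x hx => ?_
          have hx0 : (x : ℂ) ≠ 0 := ofReal_ne_zero.2 hx.1.ne'
          rw [hw_def, add_sub_right_comm, cpow_add _ _ hx0, cpow_natCast]
          ring
      _ = betaIntegral (u + k) v * (z ^ k / k !) := integral_mul_const _ _
      _ = _ := by rw [betaIntegral_add_nat_left hu hv]; ring
  have hsum : HasSum (fun k : ℕ => ∫ x : ℝ in 0..1, w x * ((z * x) ^ k / k !))
      (∫ x : ℝ in 0..1, w x * exp (z * x)) := by
    refine hasSum_integral_of_dominated_convergence (fun k x => ‖w x‖ * (‖z‖ ^ k / k !))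
      (fun k => ?_) (fun k => ?_) ?_ ?_ ?_
    · exact (hw.mul_continuousOn (by fun_prop : Continuous _).continuousOn).def'.1
    · refine .of_forall fun x hx => ?_
      rw [Set.uIoc_of_le zero_le_one] at hx
      have hx_norm : ‖(x : ℂ)‖ ≤ 1 := by
        rw [norm_real, Real.norm_of_nonneg hx.1.le]; exact hx.2
      rw [norm_mul, norm_div, norm_pow, norm_natCast]
      gcongr
      exact (norm_mul z _).trans_le (mul_le_of_le_one_right (norm_nonneg z) hx_norm)
    · exact .of_forall fun x _ => (Real.summable_pow_div_factorial _).mul_left _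
    · simp_rw [tsum_mul_left]
      exact hw.norm.mul_const _
    · refine .of_forall fun x _ => ?_
      rw [exp_eq_exp_ℂ]
      exact (NormedSpace.expSeries_div_hasSum_exp (z * x)).mul_left (w x)
  simp_rw [hterm] at hsum
  rw [← hsum.tsum_eq, tsum_mul_left, hyp1F1]

noncomputable def gammaKernel (α ξ : ℂ) (x : ℝ) : ℂ := (x : ℂ) ^ (α - 1) * exp (-ξ * x)

theorem gammaKernel_conv_scaled (α β ξ η : ℂ) {t x : ℝ} (ht : 0 ≤ t) (hx₀ : 0 ≤ x)
    (hx₁ : x ≤ 1) :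
    gammaKernel α ξ (t - t * x) * gammaKernel β η (t * x) =
      (t : ℂ) ^ (α - 1) * (t : ℂ) ^ (β - 1) * exp (-ξ * t) *
        ((x : ℂ) ^ (β - 1) * (1 - (x : ℂ)) ^ (α - 1) * exp ((ξ - η) * t * x)) := by
  have hsub : ((t - t * x : ℝ) : ℂ) = (t : ℂ) * ((1 - x : ℝ) : ℂ) := by push_cast; ring
  have hexp : exp (-ξ * t * (1 - x)) * exp (-η * t * x) =
      exp (-ξ * t) * exp ((ξ - η) * t * x) := by
    rw [← exp_add, ← exp_add]; ring_nf
  rw [gammaKernel, gammaKernel, hsub, mul_cpow_ofReal_nonneg ht (by linarith),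
    ofReal_mul, mul_cpow_ofReal_nonneg ht hx₀, ← mul_assoc (-ξ)]
  push_cast
  linear_combination (norm := ring_nf)
    (t : ℂ) ^ (α - 1) * (1 - (x : ℂ)) ^ (α - 1) * (t : ℂ) ^ (β - 1) * (x : ℂ) ^ (β - 1) * hexp

theorem intervalIntegrable_gammaKernel_conv {α β : ℂ} (hα : 0 < α.re) (hβ : 0 < β.re)
    (ξ η : ℂ) {t : ℝ} (ht : 0 < t) :
    IntervalIntegrable (fun y => gammaKernel α ξ (t - y) * gammaKernel β η y) volume 0 t := by
  rw [← IntervalIntegrable.comp_mul_left_iff ht.ne', zero_div, div_self ht.ne']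
  refine (((betaIntegral_convergent hβ hα).mul_continuousOn
    (by fun_prop : Continuous fun x : ℝ => exp ((ξ - η) * t * x)).continuousOn).const_mul
    ((t : ℂ) ^ (α - 1) * (t : ℂ) ^ (β - 1) * exp (-ξ * t))).congr_uIoo fun x hx => ?_
  rw [Set.uIoo_of_le zero_le_one] at hx
  exact (gammaKernel_conv_scaled α β ξ η ht.le hx.1.le hx.2.le).symm

theorem integral_gammaKernel_conv {α β : ℂ} (hα : 0 < α.re) (hβ : 0 < β.re) (ξ η : ℂ) {t : ℝ}
    (ht : 0 < t) :
    ∫ y in (0 : ℝ)..t, gammaKernel α ξ (t - y) * gammaKernel β η y =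
      (t : ℂ) ^ (α + β - 1) * betaIntegral β α * exp (-ξ * t) * hyp1F1 β (α + β) ((ξ - η) * t) := by
  have ht₀ : (t : ℂ) ≠ 0 := ofReal_ne_zero.2 ht.ne'
  calc ∫ y in (0 : ℝ)..t, gammaKernel α ξ (t - y) * gammaKernel β η y
      = t • ∫ x in (0 : ℝ)..1, gammaKernel α ξ (t - t * x) * gammaKernel β η (t * x) := by
        rw [smul_integral_comp_mul_left (fun y => gammaKernel α ξ (t - y) * gammaKernel β η y),
          mul_zero, mul_one]
    _ = t • ∫ x in (0 : ℝ)..1, (t : ℂ) ^ (α - 1) * (t : ℂ) ^ (β - 1) * exp (-ξ * t) *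
          ((x : ℂ) ^ (β - 1) * (1 - (x : ℂ)) ^ (α - 1) * exp ((ξ - η) * t * x)) := by
        congr 1
        refine integral_congr fun x hx => ?_
        rw [Set.uIcc_of_le zero_le_one] at hx
        exact gammaKernel_conv_scaled α β ξ η ht.le hx.1 hx.2
    _ = _ := by
        rw [intervalIntegral.integral_const_mul, integral_betaIntegrand_mul_exp hβ hα,
          add_comm β α, real_smul, show α + β - 1 = 1 + (α - 1) + (β - 1) by ring,
          cpow_add _ _ ht₀, cpow_add _ _ ht₀, cpow_one]
        ring

theorem ofReal_rpow_mul_sum_exp_eq_sum_gammaKernel {ι : Type*} (s : Finset ι) (α : ℝ) {x : ℝ}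
    (hx : 0 ≤ x) (a ξ : ι → ℂ) :
    ((x ^ (α - 1) : ℝ) : ℂ) * ∑ i ∈ s, a i * exp (-ξ i * x) =
      ∑ i ∈ s, a i * gammaKernel α (ξ i) x := by
  rw [ofReal_cpow hx, Finset.mul_sum]
  push_cast
  exact Finset.sum_congr rfl fun i _ => by rw [gammaKernel]; ring

theorem pdf_of_sum_general
    (α β : ℝ) (hα : 0 < α) (hβ : 0 < β)
    (M N : ℕ) (a : Fin M → ℂ) (b : Fin N → ℂ) (ξ : Fin M → ℂ) (η : Fin N → ℂ)
    (f g : ℝ → ℝ)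
    (hf : ∀ x > (0 : ℝ), ((f x : ℝ) : ℂ) =
      ((x ^ (α - 1) : ℝ) : ℂ) * ∑ m, a m * Complex.exp (-ξ m * x))
    (hg : ∀ y > (0 : ℝ), ((g y : ℝ) : ℂ) =
      ((y ^ (β - 1) : ℝ) : ℂ) * ∑ n, b n * Complex.exp (-η n * y))
    (t : ℝ) (ht : 0 < t) :
    ((∫ y in (0 : ℝ)..t, f (t - y) * g y : ℝ) : ℂ)
      = ((t ^ (α + β - 1) : ℝ) : ℂ) *
          (Complex.Gamma α * Complex.Gamma β / Complex.Gamma (α + β)) *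
          ∑ m, ∑ n, a m * b n * Complex.exp (-ξ m * t) *
            hyp1F1 β (α + β) ((ξ m - η n) * t) := by
  have hα' : 0 < (α : ℂ).re := by simpa using hα
  have hβ' : 0 < (β : ℂ).re := by simpa using hβ
  have hexpand : ∀ y ∈ Set.Ioo 0 t, ((f (t - y) * g y : ℝ) : ℂ) =
      ∑ m, ∑ n, a m * b n * (gammaKernel α (ξ m) (t - y) * gammaKernel β (η n) y) := by
    intro y hy
    rw [ofReal_mul, hf _ (sub_pos.2 hy.2), hg _ hy.1,
      ofReal_rpow_mul_sum_exp_eq_sum_gammaKernel _ _ (sub_pos.2 hy.2).le,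
      ofReal_rpow_mul_sum_exp_eq_sum_gammaKernel _ _ hy.1.le,
      Finset.sum_mul_sum]
    exact Finset.sum_congr rfl fun m _ => Finset.sum_congr rfl fun n _ => by ring
  have hint (m : Fin M) (n : Fin N) :=
    (intervalIntegrable_gammaKernel_conv hα' hβ' (ξ m) (η n) ht).const_mul (a m * b n)
  calc ((∫ y in (0 : ℝ)..t, f (t - y) * g y : ℝ) : ℂ)
      = ∫ y in (0 : ℝ)..t, ∑ m, ∑ n,
          a m * b n * (gammaKernel α (ξ m) (t - y) * gammaKernel β (η n) y) := by
        rw [← integral_ofReal]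
        exact integral_congr_Ioo_of_le ht.le hexpand
    _ = ∑ m, ∑ n, a m * b n *
          ∫ y in (0 : ℝ)..t, gammaKernel α (ξ m) (t - y) * gammaKernel β (η n) y := by
        rw [integral_finsetSum fun m _ => by
          simpa only [Finset.sum_fn] using IntervalIntegrable.sum _ fun n _ => hint m n]
        refine Finset.sum_congr rfl fun m _ => ?_
        rw [integral_finsetSum fun n _ => hint m n]
        simp_rw [intervalIntegral.integral_const_mul]
    _ = _ := by
        simp_rw [integral_gammaKernel_conv hα' hβ' _ _ ht, betaIntegral_symm,
          betaIntegral_eq_Gamma_mul_div _ _ hα' hβ', ofReal_cpow ht.le, Finset.mul_sum]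
        push_cast
        exact Finset.sum_congr rfl fun m _ => Finset.sum_congr rfl fun n _ => by ring

theorem pdf_of_sum
    (α β : ℝ) (hα : 0 < α) (hβ : 0 < β)
    (M N : ℕ) (a : Fin M → ℂ) (b : Fin N → ℂ) (ξ : Fin M → ℂ) (η : Fin N → ℂ)
    (hξ : ∀ m, 0 < (ξ m).re) (hη : ∀ n, 0 < (η n).re)
    (f g : ℝ → ℝ)
    (hf : ∀ x > (0 : ℝ), ((f x : ℝ) : ℂ) =
      ((x ^ (α - 1) : ℝ) : ℂ) * ∑ m, a m * Complex.exp (-ξ m * x))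
    (hg : ∀ y > (0 : ℝ), ((g y : ℝ) : ℂ) =
      ((y ^ (β - 1) : ℝ) : ℂ) * ∑ n, b n * Complex.exp (-η n * y))
    (hf0 : ∀ x, 0 ≤ f x) (hg0 : ∀ y, 0 ≤ g y)
    (hf1 : ∫ x in Set.Ioi (0 : ℝ), f x = 1)
    (hg1 : ∫ y in Set.Ioi (0 : ℝ), g y = 1)
    (t : ℝ) (ht : 0 < t) :
    ((∫ y in (0 : ℝ)..t, f (t - y) * g y : ℝ) : ℂ)
      = ((t ^ (α + β - 1) : ℝ) : ℂ) *
          (Complex.Gamma α * Complex.Gamma β / Complex.Gamma (α + β)) *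
          ∑ m, ∑ n, a m * b n * Complex.exp (-ξ m * t) *
            hyp1F1 β (α + β) ((ξ m - η n) * t) :=
  pdf_of_sum_general α β hα hβ M N a b ξ η f g hf hg t ht
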